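/- If φ ∈ S_G and L_φ(x) = φ(x)x is a bijection of G, then the map ψ defined by ψ(L_φ(x)) = (φ(x))⁻¹ is a well-defined element of S_G satisfying φ ∗ ψ = ψ ∗ φ = r. -/
import Mathlib


/-- A groupoid in the sense of Hahn: a set with a partially defined product,
an inverse map, and a composability relation. -/
structure GroupoidStr (G : Type*) where
  mul : G → G → G
  inv : G → G
  comp : G → G → Prop
  inv_inv : ∀ x, inv (inv x) = x
  comp_mul_left : ∀ {x y z}, comp x y → comp y z → comp (mul x y) z
  comp_mul_right : ∀ {x y z}, comp x y → comp y z → comp x (mul y z)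
  mul_assoc : ∀ {x y z}, comp x y → comp y z → mul (mul x y) z = mul x (mul y z)
  comp_inv_left : ∀ x, comp (inv x) x
  comp_inv_right : ∀ x, comp x (inv x)
  inv_mul_cancel : ∀ {x y}, comp x y → mul (inv x) (mul x y) = y
  mul_inv_cancel : ∀ {z x}, comp z x → mul (mul z x) (inv x) = z
  /-- `(x, y)` is composable iff `d x = r y`. -/
  comp_iff : ∀ x y, comp x y ↔ mul (inv x) x = mul y (inv y)

namespace GroupoidStr

variable {G : Type*} (𝔾 : GroupoidStr G)

/-- The range map `r x = x * x⁻¹`. -/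
def r (x : G) : G := 𝔾.mul x (𝔾.inv x)

/-- The domain map `d x = x⁻¹ * x`. -/
def d (x : G) : G := 𝔾.mul (𝔾.inv x) x

/-- The set `S_G` of maps `f : G → G` with `d (f x) = r x`. -/
def SG : Set (G → G) := {f | ∀ x, 𝔾.d (f x) = 𝔾.r x}

/-- The set `S'_G` of maps `h : G → G` with `r (h x) = d x`. -/
def SG' : Set (G → G) := {h | ∀ x, 𝔾.r (h x) = 𝔾.d x}

/-- The operation `(f ∗ g) x = g (f x · x) · f x` on `S_G`. -/
def star (f g : G → G) : G → G := fun x => 𝔾.mul (g (𝔾.mul (f x) x)) (f x)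

/-- The operation `(h ⋆ k) x = h x · k (x · h x)` on `S'_G`. -/
def star' (h k : G → G) : G → G := fun x => 𝔾.mul (h x) (k (𝔾.mul x (h x)))

/-- The map `f ↦ f*`, `f* x = (f x⁻¹)⁻¹`. -/
def dagger (f : G → G) : G → G := fun x => 𝔾.inv (f (𝔾.inv x))

/-- `L_φ x = φ x · x`. -/
def L (φ : G → G) : G → G := fun x => 𝔾.mul (φ x) x

/-- `R_ψ x = x · ψ x`. -/
def R (ψ : G → G) : G → G := fun x => 𝔾.mul x (ψ x)

end GroupoidStr

namespace GroupoidStr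

variable {G : Type*} (𝔾 : GroupoidStr G)

lemma cancel_right' {x y z : G} (h1 : 𝔾.comp y x) (h2 : 𝔾.comp z x)
    (h : 𝔾.mul y x = 𝔾.mul z x) : y = z := by
  have e1 := 𝔾.mul_inv_cancel h1
  have e2 := 𝔾.mul_inv_cancel h2
  rw [h] at e1
  rw [e2] at e1
  exact e1.symm

lemma r_mul_self' (z : G) : 𝔾.mul (𝔾.r z) z = z := by
  have := 𝔾.mul_inv_cancel (𝔾.comp_inv_right z)
  rwa [𝔾.inv_inv] at this

lemma r_mul' {a b : G} (h : 𝔾.comp a b) : 𝔾.r (𝔾.mul a b) = 𝔾.r a := by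
  have hba : 𝔾.comp (𝔾.inv b) (𝔾.inv a) := by
    rw [𝔾.comp_iff, 𝔾.inv_inv, 𝔾.inv_inv]
    exact ((𝔾.comp_iff a b).mp h).symm
  have hab_binv : 𝔾.comp (𝔾.mul a b) (𝔾.inv b) :=
    𝔾.comp_mul_left h (𝔾.comp_inv_right b)
  have hab_ba : 𝔾.comp (𝔾.mul a b) (𝔾.mul (𝔾.inv b) (𝔾.inv a)) :=
    𝔾.comp_mul_right hab_binv hba
  have key : 𝔾.mul (𝔾.mul a b) (𝔾.mul (𝔾.inv b) (𝔾.inv a)) = 𝔾.r a := by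
    rw [← 𝔾.mul_assoc hab_binv hba, 𝔾.mul_inv_cancel h]; exact rfl
  set w := 𝔾.inv (𝔾.mul a b) with hw
  have hcw : 𝔾.comp w (𝔾.mul a b) := 𝔾.comp_inv_left _
  have hcwra : 𝔾.comp w (𝔾.r a) := by
    rw [← key]; exact 𝔾.comp_mul_right hcw hab_ba
  have hXra : 𝔾.comp (𝔾.mul (𝔾.mul a b) w) (𝔾.r a) :=
    𝔾.comp_mul_left (𝔾.comp_inv_right (𝔾.mul a b)) hcwra
  have hwra : 𝔾.mul w (𝔾.r a) = 𝔾.mul (𝔾.inv b) (𝔾.inv a) := by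
    have := 𝔾.inv_mul_cancel hab_ba
    rwa [key] at this
  have hmain : 𝔾.mul (𝔾.mul (𝔾.mul a b) w) (𝔾.r a) = 𝔾.r a := by
    rw [𝔾.mul_assoc (𝔾.comp_inv_right (𝔾.mul a b)) hcwra, hwra, key]
  have hcra_a : 𝔾.comp (𝔾.r a) a :=
    𝔾.comp_mul_left (𝔾.comp_inv_right a) (𝔾.comp_inv_left a)
  have hcra_ra : 𝔾.comp (𝔾.r a) (𝔾.r a) :=
    𝔾.comp_mul_right hcra_a (𝔾.comp_inv_right a)
  have hrara : 𝔾.mul (𝔾.r a) (𝔾.r a) = 𝔾.r a := by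
    show 𝔾.mul (𝔾.r a) (𝔾.mul a (𝔾.inv a)) = 𝔾.r a
    rw [← 𝔾.mul_assoc hcra_a (𝔾.comp_inv_right a), r_mul_self']; exact rfl
  exact 𝔾.cancel_right' hXra hcra_ra (by show 𝔾.mul (𝔾.mul (𝔾.mul a b) w) (𝔾.r a) = 𝔾.mul (𝔾.r a) (𝔾.r a); rw [hmain, hrara])

end GroupoidStr

open GroupoidStr

theorem stmt14 {G : Type*} (𝔾 : GroupoidStr G) {φ : G → G}
    (hφ : φ ∈ 𝔾.SG) (hbij : Function.Bijective (𝔾.L φ)) :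
    ∃ ψ : G → G, (∀ x, ψ (𝔾.mul (φ x) x) = 𝔾.inv (φ x)) ∧
      ψ ∈ 𝔾.SG ∧ 𝔾.star φ ψ = 𝔾.r ∧ 𝔾.star ψ φ = 𝔾.r := by 
  classical
  have compφ : ∀ x, 𝔾.comp (φ x) x := fun x => (𝔾.comp_iff (φ x) x).mpr (hφ x)
  let e := Equiv.ofBijective (𝔾.L φ) hbij
  refine ⟨fun y => 𝔾.inv (φ (e.symm y)), ?_, ?_, ?_, ?_⟩
  · intro x
    show 𝔾.inv (φ (e.symm (𝔾.mul (φ x) x))) = 𝔾.inv (φ x)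
    rw [show e.symm (𝔾.mul (φ x) x) = x from e.symm_apply_apply x]
  · intro y
    set x := e.symm y with hx
    have hy : y = 𝔾.mul (φ x) x := (e.apply_symm_apply y).symm
    show 𝔾.d (𝔾.inv (φ x)) = 𝔾.r y
    have h1 : 𝔾.d (𝔾.inv (φ x)) = 𝔾.r (φ x) := by
      show 𝔾.mul (𝔾.inv (𝔾.inv (φ x))) (𝔾.inv (φ x)) = 𝔾.r (φ x)
      rw [𝔾.inv_inv]; rfl
    rw [h1, hy, 𝔾.r_mul' (compφ x)]
  · funext x
    show 𝔾.mul (𝔾.inv (φ (e.symm (𝔾.mul (φ x) x)))) (φ x) = 𝔾.r x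
    have : e.symm (𝔾.mul (φ x) x) = x := e.symm_apply_apply x
    rw [this]
    exact hφ x
  · funext y
    set x := e.symm y with hx
    have hy : y = 𝔾.mul (φ x) x := (e.apply_symm_apply y).symm
    show 𝔾.mul (φ (𝔾.mul (𝔾.inv (φ x)) y)) (𝔾.inv (φ x)) = 𝔾.r y
    have h1 : 𝔾.mul (𝔾.inv (φ x)) y = x := by
      rw [hy]; exact 𝔾.inv_mul_cancel (compφ x)
    rw [h1, hy, 𝔾.r_mul' (compφ x)]
    rfl
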